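/- Let $L_1,\dots,L_6$ be six pairwise distinct lines in the projective plane over a field such that no point lies on more than three of the lines. Then there exist at least three distinct points each lying on exactly two of the six lines. -/

import Mathlib

/-!
Every point on the six lines is the meet of two of them, hence has multiplicity `m ∈ {2, 3}`.
Counting ordered pairs of distinct lines through their meeting point gives
`∑ₚ m(m - 1) = 30`, i.e. `2d + 6t = 30` for `d` double and `t` triple points, so `d ≡ 0 mod 3`.
On a fixed line the other five lines are distributed over its points, `m - 1` at each point,
so some point on it has even multiplicity: `d ≥ 1`, hence `d ≥ 3`.
-/

open scoped Classical

open Finset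

section Incidence

-- `T p` is the set of lines through the point `p`; `hS` says that two distinct lines meet in
-- exactly one point of `S`.
variable {ι P : Type*} [Fintype ι] [DecidableEq ι] {S : Finset P} {T : P → Finset ι}
  (hS : ∀ i j, i ≠ j → #{p ∈ S | i ∈ T p ∧ j ∈ T p} = 1)
include hS

theorem sum_card_offDiag_eq_of_card_filter_eq_one :
    ∑ p ∈ S, #(T p).offDiag = Fintype.card ι * Fintype.card ι - Fintype.card ι := by
  have hpairs : ∀ p, univ.offDiag.bipartiteAbove (fun p ij => ij.1 ∈ T p ∧ ij.2 ∈ T p) p =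
      (T p).offDiag := fun p => by
    ext ⟨i, j⟩
    simp only [bipartiteAbove, mem_filter, mem_offDiag, mem_univ, true_and]
    tauto
  calc ∑ p ∈ S, #(T p).offDiag
      = ∑ ij ∈ (univ : Finset ι).offDiag,
          #(S.bipartiteBelow (fun p ij => ij.1 ∈ T p ∧ ij.2 ∈ T p) ij) := by
        simp_rw [← hpairs]
        exact sum_card_bipartiteAbove_eq_sum_card_bipartiteBelow _
    _ = ∑ _ij ∈ (univ : Finset ι).offDiag, 1 :=
        sum_congr rfl fun ij hij => hS ij.1 ij.2 (mem_offDiag.1 hij).2.2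
    _ = Fintype.card ι * Fintype.card ι - Fintype.card ι := by
        rw [← card_eq_sum_ones, offDiag_card, card_univ]

theorem sum_card_sub_one_eq_of_card_filter_eq_one (i : ι) :
    ∑ p ∈ S with i ∈ T p, (#(T p) - 1) = Fintype.card ι - 1 := by
  have hothers : ∀ p ∈ S.filter (i ∈ T ·),
      (univ.erase i).bipartiteAbove (fun p j => j ∈ T p) p = (T p).erase i := fun p _ => by
    ext j
    simp [bipartiteAbove, and_comm]
  calc ∑ p ∈ S with i ∈ T p, (#(T p) - 1)
      = ∑ p ∈ S with i ∈ T p, #((univ.erase i).bipartiteAbove (fun p j => j ∈ T p) p) :=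
        sum_congr rfl fun p hp => by
          rw [hothers p hp, card_erase_of_mem (mem_filter.1 hp).2]
    _ = ∑ j ∈ univ.erase i, #((S.filter (i ∈ T ·)).bipartiteBelow (fun p j => j ∈ T p) j) :=
        sum_card_bipartiteAbove_eq_sum_card_bipartiteBelow _
    _ = ∑ _j ∈ univ.erase i, 1 := sum_congr rfl fun j hj => by
        rw [bipartiteBelow, filter_filter]
        exact hS i j (ne_of_mem_erase hj).symm
    _ = Fintype.card ι - 1 := by rw [← card_eq_sum_ones, card_erase_of_mem (mem_univ i), card_univ]

theorem exists_even_card_of_card_filter_eq_one (hι : Even (Fintype.card ι)) (i : ι) :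
    ∃ p ∈ S, i ∈ T p ∧ Even #(T p) := by
  by_contra! hodd
  have hsum_even : Even (∑ p ∈ S with i ∈ T p, (#(T p) - 1)) :=
    even_sum _ fun p hp => by
      rw [mem_filter] at hp
      exact Nat.Odd.sub_odd (Nat.not_even_iff_odd.1 (hodd p hp.1 hp.2)) odd_one
  rw [sum_card_sub_one_eq_of_card_filter_eq_one hS i] at hsum_even
  exact Nat.not_even_iff_odd.2 (Nat.Even.sub_odd (Fintype.card_pos_iff.2 ⟨i⟩) hι odd_one) hsum_even

theorem three_le_card_filter_card_eq_two (hι : Fintype.card ι = 6)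
    (hT : ∀ p ∈ S, #(T p) = 2 ∨ #(T p) = 3) : 3 ≤ #{p ∈ S | #(T p) = 2} := by
  have hcount := sum_card_offDiag_eq_of_card_filter_eq_one hS
  rw [hι, ← sum_filter_add_sum_filter_not S (fun p => #(T p) = 2),
    sum_const_nat (m := 2) fun p hp => by rw [offDiag_card, (mem_filter.1 hp).2],
    sum_const_nat (m := 6) fun p hp => by
      obtain ⟨hpS, hp2⟩ := mem_filter.1 hp
      rw [offDiag_card, (hT p hpS).resolve_left hp2]] at hcount
  have hdouble : 0 < #{p ∈ S | #(T p) = 2} := by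
    obtain ⟨i⟩ : Nonempty ι := Fintype.card_pos_iff.1 (by omega)
    obtain ⟨p, hpS, -, heven⟩ := exists_even_card_of_card_filter_eq_one hS (by rw [hι]; decide) i
    refine card_pos.2 ⟨p, mem_filter.2 ⟨hpS, ?_⟩⟩
    rcases hT p hpS with h | h
    · exact h
    · exact absurd (h ▸ heven) (by decide)
  omega

end Incidence

section ProjectivePlane

variable {k V ι : Type*} [Field k] [AddCommGroup V] [Module k V] [Fintype ι]

theorem Submodule.finrank_inf_eq_one_of_finrank_eq_two (hV : Module.finrank k V = 3)
    {W₁ W₂ : Submodule k V} (h₁ : Module.finrank k W₁ = 2) (h₂ : Module.finrank k W₂ = 2)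
    (hne : W₁ ≠ W₂) : Module.finrank k ↥(W₁ ⊓ W₂) = 1 := by
  have : FiniteDimensional k V := Module.finite_of_finrank_eq_succ hV
  have hsup : Module.finrank k ↥(W₁ ⊔ W₂) ≤ 3 := hV ▸ Submodule.finrank_le _
  have hlt : Module.finrank k ↥(W₁ ⊓ W₂) < 2 :=
    h₁ ▸ Submodule.finrank_lt_finrank_of_lt (inf_lt_left.2 fun hle =>
      hne (Submodule.eq_of_le_of_finrank_eq hle (h₁.trans h₂.symm)))
  have := Submodule.finrank_sup_add_finrank_inf_eq W₁ W₂
  omega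

noncomputable def intersectionPoints (L : ι → Submodule k V) : Finset (Submodule k V) :=
  univ.offDiag.image fun ij => L ij.1 ⊓ L ij.2

noncomputable def linesThrough (L : ι → Submodule k V) (p : Submodule k V) : Finset ι :=
  {i | p ≤ L i}

variable {L : ι → Submodule k V}

theorem mem_intersectionPoints {p : Submodule k V} :
    p ∈ intersectionPoints L ↔ ∃ i j, i ≠ j ∧ L i ⊓ L j = p := by
  simp [intersectionPoints]

theorem mem_linesThrough {p : Submodule k V} {i : ι} : i ∈ linesThrough L p ↔ p ≤ L i := by
  simp [linesThrough]

theorem two_le_card_linesThrough {p : Submodule k V} (hp : p ∈ intersectionPoints L) :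
    2 ≤ #(linesThrough L p) := by
  obtain ⟨i, j, hij, rfl⟩ := mem_intersectionPoints.1 hp
  rw [← card_pair hij]
  refine card_le_card fun l hl => mem_linesThrough.2 ?_
  rcases mem_insert.1 hl with rfl | hl
  · exact inf_le_left
  · exact mem_singleton.1 hl ▸ inf_le_right

variable (hV : Module.finrank k V = 3) (hdim : ∀ i, Module.finrank k (L i) = 2)
  (hinj : Function.Injective L)
include hV hdim hinj

theorem finrank_of_mem_intersectionPoints {p : Submodule k V} (hp : p ∈ intersectionPoints L) :
    Module.finrank k p = 1 := by
  obtain ⟨i, j, hij, rfl⟩ := mem_intersectionPoints.1 hp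
  exact Submodule.finrank_inf_eq_one_of_finrank_eq_two hV (hdim i) (hdim j) (hinj.ne hij)

theorem card_filter_intersectionPoints_eq_one [DecidableEq ι] {i j : ι} (hij : i ≠ j) :
    #{p ∈ intersectionPoints L | i ∈ linesThrough L p ∧ j ∈ linesThrough L p} = 1 := by
  have : FiniteDimensional k V := Module.finite_of_finrank_eq_succ hV
  refine card_eq_one.2 ⟨L i ⊓ L j, ext fun p => ?_⟩
  simp only [mem_filter, mem_linesThrough, mem_singleton]
  constructor
  · rintro ⟨hp, hpi, hpj⟩
    refine Submodule.eq_of_le_of_finrank_eq (le_inf hpi hpj) ?_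
    rw [finrank_of_mem_intersectionPoints hV hdim hinj hp,
      Submodule.finrank_inf_eq_one_of_finrank_eq_two hV (hdim i) (hdim j) (hinj.ne hij)]
  · rintro rfl
    exact ⟨mem_intersectionPoints.2 ⟨i, j, hij, rfl⟩, inf_le_left, inf_le_right⟩

end ProjectivePlane

theorem stmt_4 {k : Type*} [Field k]
    (L : Fin 6 → Submodule k (Fin 3 → k))
    (hdim : ∀ i, Module.finrank k (L i) = 2)
    (hinj : Function.Injective L)
    (hmult : ∀ p : Submodule k (Fin 3 → k), Module.finrank k p = 1 →
      (Finset.univ.filter (fun i => p ≤ L i)).card ≤ 3) :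
    ∃ p q r : Submodule k (Fin 3 → k), p ≠ q ∧ p ≠ r ∧ q ≠ r ∧
      Module.finrank k p = 1 ∧ Module.finrank k q = 1 ∧ Module.finrank k r = 1 ∧
      (Finset.univ.filter (fun i => p ≤ L i)).card = 2 ∧
      (Finset.univ.filter (fun i => q ≤ L i)).card = 2 ∧
      (Finset.univ.filter (fun i => r ≤ L i)).card = 2 := by
  have hV : Module.finrank k (Fin 3 → k) = 3 := by simp
  have hpoint : ∀ {p}, p ∈ intersectionPoints L → Module.finrank k p = 1 :=
    finrank_of_mem_intersectionPoints hV hdim hinj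
  have hdouble_or_triple :
      ∀ p ∈ intersectionPoints L, #(linesThrough L p) = 2 ∨ #(linesThrough L p) = 3 :=
    fun p hp => by
      have : #(linesThrough L p) ≤ 3 := hmult p (hpoint hp)
      have := two_le_card_linesThrough hp
      omega
  obtain ⟨p, hp, q, hq, r, hr, hpq, hpr, hqr⟩ := two_lt_card.1 <|
    three_le_card_filter_card_eq_two
      (fun _ _ => card_filter_intersectionPoints_eq_one hV hdim hinj) (by simp) hdouble_or_triple
  rw [mem_filter] at hp hq hr
  exact ⟨p, q, r, hpq, hpr, hqr, hpoint hp.1, hpoint hq.1, hpoint hr.1, hp.2, hq.2, hr.2⟩
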